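/- Let K, Φ ∈ ℝ with Φ > 0 and Φ² + K > 0. Then ∫_{x > 0} ∫_{y ∈ ℝ} x (x² + y² − 1) / ( Φ²(1+x)² + (Φ² + K) y² + K (1−x)² )³ dy dx = π / ( 8 Φ² (K + Φ²)² ). -/

import Mathlib

/-!
Write `b = Φ² + K`, `c = Φ² - K` and `Q x = b x² + 2 c x + b`; the denominator is
`Q x + b y²`, and `Q x ≥ min b (b + c) (1 + x²) > 0` for `x ≥ 0`. The inner integral is
elementary (a rational function plus an arctangent is a primitive) and equals
`π/(4b√b) · x (2b x² + c x - b) / (Q x² √(Q x))`. This in turn is the derivative of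
`P x / (Q x √(Q x))` for a cubic `P`; as `Q` is palindromic, the substitution `x ↦ 1/x` gives
the limit at infinity, and the outer integral is `1 / ((b + c) √b)`.
-/

open MeasureTheory Filter Real Set Topology

section Inner

section
variable {s t : ℝ}

lemma tendsto_cubic_div_sq_quadratic {l : Filter ℝ} (hl : Tendsto (·⁻¹) l (𝓝 0))
    (ht : t ≠ 0) (p q : ℝ) :
    Tendsto (fun y => (p * y ^ 3 + q * y) / (s ^ 2 + t ^ 2 * y ^ 2) ^ 2) l (𝓝 0) := by
  have hg : ContinuousAt (fun z : ℝ => (p * z + q * z ^ 3) / (s ^ 2 * z ^ 2 + t ^ 2) ^ 2) 0 :=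
    ContinuousAt.div (by fun_prop) (by fun_prop) (by simp [ht])
  -- The substitution `z = y⁻¹` is an identity even at `y = 0`, so `l` is arbitrary.
  convert hg.tendsto.comp hl using 2 with y
  · rcases eq_or_ne y 0 with rfl | hy
    · simp
    · simp only [Function.comp_apply]
      field_simp
  · simp

lemma hasDerivAt_primitive_div_add_mul_sq_pow_three (hs : 0 < s) (ht : 0 < t) (u v y : ℝ) :
    HasDerivAt (fun y => ((3 * t ^ 2 * u + s ^ 2 * v) / (8 * s ^ 4) * y ^ 3
        + (5 * t ^ 2 * u - s ^ 2 * v) / (8 * s ^ 2 * t ^ 2) * y) / (s ^ 2 + t ^ 2 * y ^ 2) ^ 2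
        + (3 * t ^ 2 * u + s ^ 2 * v) / (8 * s ^ 5 * t ^ 3) * arctan (t * y / s))
      ((u + v * y ^ 2) / (s ^ 2 + t ^ 2 * y ^ 2) ^ 3) y := by
  have hnum := ((hasDerivAt_pow 3 y).const_mul ((3 * t ^ 2 * u + s ^ 2 * v) / (8 * s ^ 4))).add
    ((hasDerivAt_id' y).const_mul ((5 * t ^ 2 * u - s ^ 2 * v) / (8 * s ^ 2 * t ^ 2)))
  have hden := (((hasDerivAt_pow 2 y).const_mul (t ^ 2)).const_add (s ^ 2)).pow 2
  have harc := (((hasDerivAt_id' y).const_mul t).div_const s).arctan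
  refine ((hnum.div hden (by simp only [Pi.pow_apply]; positivity)).add
    (harc.const_mul ((3 * t ^ 2 * u + s ^ 2 * v) / (8 * s ^ 5 * t ^ 3)))).congr_deriv ?_
  simp only [Pi.add_apply, Pi.pow_apply]
  field_simp
  ring

end

variable {a b : ℝ}

lemma min_mul_one_add_sq_le (y : ℝ) : min a b * (1 + y ^ 2) ≤ a + b * y ^ 2 := by
  nlinarith [min_le_left a b, min_le_right a b, sq_nonneg y]

lemma integrable_div_add_mul_sq_pow_three (ha : 0 < a) (hb : 0 < b) (u v : ℝ) :
    Integrable fun y : ℝ => (u + v * y ^ 2) / (a + b * y ^ 2) ^ 3 := by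
  set m := min a b
  have hm : 0 < m := lt_min ha hb
  have hD (y : ℝ) : 0 < a + b * y ^ 2 := by positivity
  refine (integrable_inv_one_add_sq.const_mul ((|u| + |v|) / m ^ 3)).mono'
    (Continuous.div (by fun_prop) (by fun_prop) fun y =>
      (pow_pos (hD y) 3).ne').aestronglyMeasurable
    (Eventually.of_forall fun y => ?_)
  have hw : 1 ≤ 1 + y ^ 2 := le_add_of_nonneg_right (sq_nonneg y)
  rw [norm_div, norm_pow, Real.norm_eq_abs, Real.norm_eq_abs, abs_of_pos (hD y),
    div_le_iff₀ (by positivity)]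
  calc |u + v * y ^ 2| ≤ (|u| + |v|) * (1 + y ^ 2) := by
        have := abs_add_le u (v * y ^ 2)
        rw [abs_mul, abs_of_nonneg (sq_nonneg y)] at this
        nlinarith [abs_nonneg u, abs_nonneg v, sq_nonneg y]
    _ = (|u| + |v|) / m ^ 3 * (1 + y ^ 2)⁻¹ * (m ^ 3 * (1 + y ^ 2) ^ 2) := by
        field_simp
    _ ≤ (|u| + |v|) / m ^ 3 * (1 + y ^ 2)⁻¹ * (m * (1 + y ^ 2)) ^ 3 := by
        rw [mul_pow]
        gcongr
        norm_num
    _ ≤ (|u| + |v|) / m ^ 3 * (1 + y ^ 2)⁻¹ * (a + b * y ^ 2) ^ 3 := by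
        gcongr
        exact min_mul_one_add_sq_le y

theorem integral_div_add_mul_sq_pow_three (ha : 0 < a) (hb : 0 < b) (u v : ℝ) :
    ∫ y : ℝ, (u + v * y ^ 2) / (a + b * y ^ 2) ^ 3
      = π * (3 * b * u + a * v) / (8 * a ^ 2 * √a * b * √b) := by
  obtain ⟨s, hs, rfl⟩ : ∃ s, 0 < s ∧ s ^ 2 = a := ⟨√a, sqrt_pos.2 ha, sq_sqrt ha.le⟩
  obtain ⟨t, ht, rfl⟩ : ∃ t, 0 < t ∧ t ^ 2 = b := ⟨√b, sqrt_pos.2 hb, sq_sqrt hb.le⟩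
  have hscale_top : Tendsto (fun y => t * y / s) atTop atTop :=
    (tendsto_id.const_mul_atTop ht).atTop_div_const hs
  have hscale_bot : Tendsto (fun y => t * y / s) atBot atBot :=
    (tendsto_id.const_mul_atBot ht).atBot_div_const hs
  rw [integral_of_hasDerivAt_of_tendsto (hasDerivAt_primitive_div_add_mul_sq_pow_three hs ht u v)
    (integrable_div_add_mul_sq_pow_three ha hb u v)
    ((tendsto_cubic_div_sq_quadratic tendsto_inv_atBot_zero ht.ne' _ _).add
      (((tendsto_nhds_of_tendsto_nhdsWithin tendsto_arctan_atBot).comp hscale_bot).const_mul _))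
    ((tendsto_cubic_div_sq_quadratic tendsto_inv_atTop_zero ht.ne' _ _).add
      (((tendsto_nhds_of_tendsto_nhdsWithin tendsto_arctan_atTop).comp hscale_top).const_mul _)),
    sqrt_sq hs.le, sqrt_sq ht.le]
  field_simp
  ring

end Inner

section Outer

variable {b c : ℝ}

lemma min_mul_one_add_sq_le_quadratic {x : ℝ} (hx : 0 ≤ x) :
    min b (b + c) * (1 + x ^ 2) ≤ b * x ^ 2 + 2 * c * x + b := by
  rcases le_total 0 c with hc | hc
  · nlinarith [min_le_left b (b + c), mul_nonneg hc hx, sq_nonneg x]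
  · nlinarith [min_le_right b (b + c), mul_nonneg (neg_nonneg.2 hc) (sq_nonneg (1 - x)),
      sq_nonneg x]

lemma quadratic_pos_of_nonneg (hb : 0 < b) (hbc : 0 < b + c) {x : ℝ} (hx : 0 ≤ x) :
    0 < b * x ^ 2 + 2 * c * x + b :=
  (mul_pos (lt_min hb hbc) (by positivity)).trans_le (min_mul_one_add_sq_le_quadratic hx)

lemma hasDerivAt_cubic_div_quadratic_mul_sqrt (q₃ q₂ q₁ q₀ : ℝ) {x : ℝ}
    (hQ : 0 < b * x ^ 2 + 2 * c * x + b) :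
    HasDerivAt (fun x => (q₃ * x ^ 3 + q₂ * x ^ 2 + q₁ * x + q₀) /
        ((b * x ^ 2 + 2 * c * x + b) * √(b * x ^ 2 + 2 * c * x + b)))
      (((3 * q₃ * x ^ 2 + 2 * q₂ * x + q₁) * (b * x ^ 2 + 2 * c * x + b)
          - 3 * (q₃ * x ^ 3 + q₂ * x ^ 2 + q₁ * x + q₀) * (b * x + c)) /
        ((b * x ^ 2 + 2 * c * x + b) ^ 2 * √(b * x ^ 2 + 2 * c * x + b))) x := by
  have hnum := ((((hasDerivAt_pow 3 x).const_mul q₃).add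
    ((hasDerivAt_pow 2 x).const_mul q₂)).add ((hasDerivAt_id' x).const_mul q₁)).add_const q₀
  have hquad :=
    (((hasDerivAt_pow 2 x).const_mul b).add ((hasDerivAt_id' x).const_mul (2 * c))).add_const b
  have hr : 0 < √(b * x ^ 2 + 2 * c * x + b) := sqrt_pos.2 hQ
  refine (hnum.div (hquad.mul (hquad.sqrt hQ.ne'))
    (by simp only [Pi.add_apply, Pi.mul_apply]; positivity)).congr_deriv ?_
  simp only [Pi.add_apply, Pi.mul_apply]
  have hr2 := sq_sqrt hQ.le
  generalize √(b * x ^ 2 + 2 * c * x + b) = r at hr hr2 ⊢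
  rw [← hr2]
  field_simp
  ring

lemma tendsto_cubic_div_quadratic_mul_sqrt_atTop (hb : 0 < b) (q₃ q₂ q₁ q₀ : ℝ) :
    Tendsto (fun x => (q₃ * x ^ 3 + q₂ * x ^ 2 + q₁ * x + q₀) /
        ((b * x ^ 2 + 2 * c * x + b) * √(b * x ^ 2 + 2 * c * x + b)))
      atTop (𝓝 (q₃ / (b * √b))) := by
  have hrev : ContinuousAt (fun z => (q₃ + q₂ * z + q₁ * z ^ 2 + q₀ * z ^ 3) /
      ((b * z ^ 2 + 2 * c * z + b) * √(b * z ^ 2 + 2 * c * z + b))) 0 :=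
    ContinuousAt.div (by fun_prop) (by fun_prop) (by simp [hb.ne', hb.le])
  convert (hrev.tendsto.comp tendsto_inv_atTop_zero).congr' ?_ using 2
  · simp
  filter_upwards [eventually_gt_atTop 0] with x hx
  have hpal : b * x⁻¹ ^ 2 + 2 * c * x⁻¹ + b = (b * x ^ 2 + 2 * c * x + b) / x ^ 2 := by
    field_simp
    ring
  simp only [Function.comp_apply]
  rw [hpal, sqrt_div' _ (sq_nonneg x), sqrt_sq hx.le]
  field_simp

lemma integrableOn_Ioi_div_quadratic_sq_mul_sqrt (hb : 0 < b) (hbc : 0 < b + c) :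
    IntegrableOn (fun x => x * (2 * b * x ^ 2 + c * x - b) /
      ((b * x ^ 2 + 2 * c * x + b) ^ 2 * √(b * x ^ 2 + 2 * c * x + b))) (Ioi 0) := by
  set δ := min b (b + c)
  have hδ : 0 < δ := lt_min hb hbc
  set C := (2 * b + |c|) / (δ ^ 2 * √δ)
  refine (integrable_inv_one_add_sq.const_mul C).integrableOn.mono' ?_ ?_
  · refine ContinuousOn.aestronglyMeasurable (ContinuousOn.div (by fun_prop) (by fun_prop) ?_)
      measurableSet_Ioi
    intro x hx
    have := quadratic_pos_of_nonneg hb hbc (le_of_lt hx)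
    positivity
  filter_upwards [ae_restrict_mem measurableSet_Ioi] with x (hx : 0 < x)
  have hQ := quadratic_pos_of_nonneg hb hbc hx.le
  have hlow := min_mul_one_add_sq_le_quadratic (b := b) (c := c) hx.le
  have hsqrt : √δ * x ≤ √(b * x ^ 2 + 2 * c * x + b) :=
    calc √δ * x = √(δ * x ^ 2) := by rw [sqrt_mul hδ.le, sqrt_sq hx.le]
      _ ≤ _ := sqrt_le_sqrt (by nlinarith)
  have hnum : |2 * b * x ^ 2 + c * x - b| ≤ (2 * b + |c|) * (1 + x ^ 2) := by
    rw [abs_le]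
    have hx' : x ≤ 1 + x ^ 2 := by nlinarith [sq_nonneg (x - 1)]
    constructor <;> nlinarith [abs_nonneg c, neg_abs_le c, le_abs_self c, sq_nonneg (x - 1),
      mul_le_mul_of_nonneg_left hx' (abs_nonneg c)]
  have hD : 0 < (b * x ^ 2 + 2 * c * x + b) ^ 2 * √(b * x ^ 2 + 2 * c * x + b) := by positivity
  rw [Real.norm_eq_abs, abs_div, abs_mul, abs_of_pos hx, abs_of_pos hD, div_le_iff₀ hD]
  calc x * |2 * b * x ^ 2 + c * x - b| ≤ x * ((2 * b + |c|) * (1 + x ^ 2)) := by gcongr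
    _ = C * (1 + x ^ 2)⁻¹ * ((δ * (1 + x ^ 2)) ^ 2 * (√δ * x)) := by
        have := sqrt_pos.2 hδ
        simp only [C]
        field_simp
    _ ≤ C * (1 + x ^ 2)⁻¹ *
          ((b * x ^ 2 + 2 * c * x + b) ^ 2 * √(b * x ^ 2 + 2 * c * x + b)) := by
        gcongr

lemma integral_Ioi_div_quadratic_sq_mul_sqrt_of_primitive (hb : 0 < b) (hbc : 0 < b + c)
    (q₃ q₂ q₁ q₀ : ℝ)
    (hP : ∀ x, (3 * q₃ * x ^ 2 + 2 * q₂ * x + q₁) * (b * x ^ 2 + 2 * c * x + b)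
        - 3 * (q₃ * x ^ 3 + q₂ * x ^ 2 + q₁ * x + q₀) * (b * x + c)
      = x * (2 * b * x ^ 2 + c * x - b)) :
    ∫ x in Ioi 0, x * (2 * b * x ^ 2 + c * x - b) /
        ((b * x ^ 2 + 2 * c * x + b) ^ 2 * √(b * x ^ 2 + 2 * c * x + b))
      = (q₃ - q₀) / (b * √b) := by
  have hderiv (x : ℝ) (hx : x ∈ Ici 0) := hP x ▸
    hasDerivAt_cubic_div_quadratic_mul_sqrt q₃ q₂ q₁ q₀ (quadratic_pos_of_nonneg hb hbc hx)
  rw [integral_Ioi_of_hasDerivAt_of_tendsto' hderiv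
    (integrableOn_Ioi_div_quadratic_sq_mul_sqrt hb hbc)
    (tendsto_cubic_div_quadratic_mul_sqrt_atTop hb q₃ q₂ q₁ q₀)]
  norm_num
  ring

theorem integral_Ioi_div_quadratic_sq_mul_sqrt (hb : 0 < b) (hbc : 0 < b + c) :
    ∫ x in Ioi 0, x * (2 * b * x ^ 2 + c * x - b) /
        ((b * x ^ 2 + 2 * c * x + b) ^ 2 * √(b * x ^ 2 + 2 * c * x + b))
      = 1 / ((b + c) * √b) := by
  -- For `c = b` the quadratic is `b (x + 1)²` and the generic cubic, with denominator `b² - c²`,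
  -- degenerates.
  rcases eq_or_ne c b with rfl | hcb
  · rw [integral_Ioi_div_quadratic_sq_mul_sqrt_of_primitive hb hbc (1 / 2) (-1 / 2) 0 0
      (fun x => by ring)]
    field_simp
    ring
  · have hD : b ^ 2 - c ^ 2 ≠ 0 := by
      rw [sq_sub_sq]
      exact mul_ne_zero hbc.ne' (sub_ne_zero.2 hcb.symm)
    rw [integral_Ioi_div_quadratic_sq_mul_sqrt_of_primitive hb hbc (-(b * c) / (b ^ 2 - c ^ 2))
      (-(2 * b ^ 2 + c ^ 2) / (b ^ 2 - c ^ 2)) (-(3 * b * c) / (b ^ 2 - c ^ 2))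
      (-b ^ 2 / (b ^ 2 - c ^ 2)) (fun x => by field_simp; ring)]
    field_simp
    ring

end Outer

lemma halfplane_inner_integral {K Φ x : ℝ} (hΦ : 0 < Φ) (hK : 0 < Φ ^ 2 + K) (hx : 0 ≤ x) :
    ∫ y : ℝ, x * (x ^ 2 + y ^ 2 - 1) /
        (Φ ^ 2 * (1 + x) ^ 2 + (Φ ^ 2 + K) * y ^ 2 + K * (1 - x) ^ 2) ^ 3
      = π / (4 * (Φ ^ 2 + K) * √(Φ ^ 2 + K)) *
        (x * (2 * (Φ ^ 2 + K) * x ^ 2 + (Φ ^ 2 - K) * x - (Φ ^ 2 + K)) /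
          (((Φ ^ 2 + K) * x ^ 2 + 2 * (Φ ^ 2 - K) * x + (Φ ^ 2 + K)) ^ 2 *
            √((Φ ^ 2 + K) * x ^ 2 + 2 * (Φ ^ 2 - K) * x + (Φ ^ 2 + K)))) := by
  have hQ := quadratic_pos_of_nonneg (c := Φ ^ 2 - K) hK (by nlinarith [pow_pos hΦ 2]) hx
  have hsqrtQ := sqrt_pos.2 hQ
  have hsqrtb := sqrt_pos.2 hK
  calc _ = ∫ y : ℝ, (x * (x ^ 2 - 1) + x * y ^ 2) /
      (((Φ ^ 2 + K) * x ^ 2 + 2 * (Φ ^ 2 - K) * x + (Φ ^ 2 + K)) + (Φ ^ 2 + K) * y ^ 2) ^ 3 := by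
        congr 1
        ext y
        ring
    _ = _ := integral_div_add_mul_sq_pow_three hQ hK _ _
    _ = _ := by
        field_simp
        ring

/-- the explicit half-plane integral
`∫_{x>0} ∫_ℝ x(x²+y²-1)/(Φ²(1+x)² + (Φ²+K)y² + K(1-x)²)³ dy dx
  = π/(8Φ²(K+Φ²)²)` for `Φ > 0` and `Φ² + K > 0`. -/
theorem halfplane_explicit_integral
    (K Φ : ℝ) (hΦ : 0 < Φ) (hK : 0 < Φ ^ 2 + K) :
    (∫ x in Set.Ioi (0 : ℝ), ∫ y : ℝ,
      x * (x ^ 2 + y ^ 2 - 1) /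
        (Φ ^ 2 * (1 + x) ^ 2 + (Φ ^ 2 + K) * y ^ 2 + K * (1 - x) ^ 2) ^ 3)
    = Real.pi / (8 * Φ ^ 2 * (K + Φ ^ 2) ^ 2) := by
  rw [setIntegral_congr_fun measurableSet_Ioi fun x hx =>
      halfplane_inner_integral hΦ hK (le_of_lt hx),
    integral_const_mul,
    integral_Ioi_div_quadratic_sq_mul_sqrt hK (by nlinarith [pow_pos hΦ 2])]
  have hsqrtb := sqrt_pos.2 hK
  have hb : K + Φ ^ 2 ≠ 0 := by linarith
  field_simp
  rw [sq_sqrt hK.le]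
  ring
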